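/- Let f : [-R, 0] → ℝ be a nonnegative concave function, let β > -1/2, and let t ∈ (-R, 0). Set p = f(t). Then ∫_{-R}^{t} f(x)/|t+x|^{2β+5} dx ≤ a₊(β)·p/|t|^{2β+4} and ∫_{t}^{0} f(x)/|t+x|^{2β+5} dx ≥ a₋(β)·p/|t|^{2β+4}, where a₊(β) = ∫₁^∞ τ/(1+τ)^{2β+5} dτ and a₋(β) = ∫₀^1 τ/(1+τ)^{2β+5} dτ. -/

import Mathlib

/-!
Concavity together with `f 0 ≥ 0` traps `f` against the line `x ↦ (p / t) x` through the origin
and `(t, p)`: `f` lies below it on `[-R, t]` and above it on `[t, 0]`. Integrating this line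
against `|t + x| ^ (-γ)` and substituting `x = t τ` gives `p / |t| ^ (γ - 1)` times the integral of
`τ / (1 + τ) ^ γ` over `[1, R / |t|]`, resp. `[0, 1]`, and the first of these is at most `a₊(β)`.
The integrals of `f` exist because a concave function on a compact interval is bounded.
-/

open Set intervalIntegral MeasureTheory

theorem ConcaveOn.smul_le_apply_smul {𝕜 E β : Type*} [Semiring 𝕜] [PartialOrder 𝕜]
    [AddCommMonoid E] [Module 𝕜 E] [AddCommMonoid β] [PartialOrder β] [IsOrderedAddMonoid β]
    [Module 𝕜 β] [PosSMulMono 𝕜 β] {s : Set E} {f : E → β} (hf : ConcaveOn 𝕜 s f) (h0 : 0 ∈ s)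
    (hf0 : 0 ≤ f 0) {x : E} (hx : x ∈ s) {a b : 𝕜} (ha : 0 ≤ a) (hb : 0 ≤ b) (hab : a + b = 1) :
    b • f x ≤ f (b • x) := by
  have h := hf.2 h0 hx ha hb hab
  rw [smul_zero, zero_add] at h
  exact le_of_add_le_of_nonneg_right h (smul_nonneg ha hf0)

section Real

variable {s : Set ℝ} {f : ℝ → ℝ}

theorem ConcaveOn.apply_le_div_mul (hf : ConcaveOn ℝ s f) (h0 : 0 ∈ s) (hf0 : 0 ≤ f 0)
    {x t : ℝ} (hx : x ∈ s) (hxt : x ≤ t) (ht : t < 0) : f x ≤ f t / t * x := by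
  have hx0 : x < 0 := hxt.trans_lt ht
  have key := hf.smul_le_apply_smul h0 hf0 hx (a := 1 - t / x) (b := t / x)
    (by rw [sub_nonneg, div_le_one_of_neg hx0]; exact hxt) (div_nonneg_of_nonpos ht.le hx0.le)
    (by ring)
  rw [smul_eq_mul, smul_eq_mul, div_mul_cancel₀ t hx0.ne] at key
  have hscaled := mul_le_mul_of_nonpos_left key hx0.le
  rw [show x * (t / x * f x) = t * f x by rw [← mul_assoc, mul_div_cancel₀ _ hx0.ne]] at hscaled
  rw [div_mul_eq_mul_div, le_div_iff_of_neg ht]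
  linarith

theorem ConcaveOn.div_mul_le_apply (hf : ConcaveOn ℝ s f) (h0 : 0 ∈ s) (hf0 : 0 ≤ f 0)
    {x t : ℝ} (ht : t ∈ s) (htx : t ≤ x) (hx : x ≤ 0) : f t / t * x ≤ f x := by
  rcases (htx.trans hx).lt_or_eq with ht0 | rfl
  · have key := hf.smul_le_apply_smul h0 hf0 ht (a := 1 - x / t) (b := x / t)
      (by rw [sub_nonneg, div_le_one_of_neg ht0]; exact htx) (div_nonneg_of_nonpos hx ht0.le)
      (by ring)
    rw [smul_eq_mul, smul_eq_mul, div_mul_cancel₀ x ht0.ne] at key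
    linarith [show f t / t * x = x / t * f t by ring]
  · simpa [le_antisymm hx htx] using hf0

end Real

theorem ConcaveOn.intervalIntegrable {f : ℝ → ℝ} {a b : ℝ} (hab : a ≤ b)
    (hf : ConcaveOn ℝ (Icc a b) f) :
    IntervalIntegrable f volume a b := by
  rw [intervalIntegrable_iff_integrableOn_Ioo_of_le hab]
  have hcont : ContinuousOn f (Ioo a b) := by
    simpa only [interior_Icc] using hf.continuousOn_interior
  set L := min (f a) (f b)
  have hlow : ∀ y ∈ Icc a b, L ≤ f y := fun y hy =>
    hf.min_le_of_mem_Icc (left_mem_Icc.2 hab) (right_mem_Icc.2 hab) hy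
  -- concavity at the midpoint: `f x + f (a + b - x) ≤ 2 f ((a + b) / 2)`
  have hup : ∀ x ∈ Icc a b, f x ≤ 2 * f ((a + b) / 2) - L := by
    intro x hx
    have hy : a + b - x ∈ Icc a b := ⟨by linarith [hx.2], by linarith [hx.1]⟩
    have h := hf.2 hx hy (by norm_num : (0:ℝ) ≤ 1 / 2) (by norm_num : (0:ℝ) ≤ 1 / 2) (by norm_num)
    simp only [smul_eq_mul] at h
    have hm : 1 / 2 * x + 1 / 2 * (a + b - x) = (a + b) / 2 := by ring
    rw [hm] at h
    linarith [hlow _ hy]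
  refine IntegrableOn.of_bound measure_Ioo_lt_top (hcont.aestronglyMeasurable measurableSet_Ioo)
    (max |L| |2 * f ((a + b) / 2) - L|) ?_
  refine ae_restrict_of_forall_mem measurableSet_Ioo fun x hx => ?_
  exact abs_le_max_abs_abs (hlow x (Ioo_subset_Icc_self hx)) (hup x (Ioo_subset_Icc_self hx))

theorem IntervalIntegrable.div_abs_add_rpow {f : ℝ → ℝ} {a b : ℝ}
    (hf : IntervalIntegrable f volume a b) {t : ℝ} (ht : ∀ x ∈ uIcc a b, t + x ≠ 0) (γ : ℝ) :
    IntervalIntegrable (fun x => f x / |t + x| ^ γ) volume a b := by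
  simp only [div_eq_mul_inv]
  refine hf.mul_continuousOn (ContinuousOn.inv₀ ?_ fun x hx => ?_)
  · exact (continuous_const.add continuous_id).abs.continuousOn.rpow_const
      fun x hx => Or.inl (abs_ne_zero.2 (ht x hx))
  · exact (Real.rpow_pos_of_pos (abs_pos.2 (ht x hx)) γ).ne'

theorem integral_div_mul_div_abs_add_rpow {t : ℝ} (ht : t < 0) (c γ : ℝ) {a b : ℝ}
    (ha : -1 ≤ a) (hb : -1 ≤ b) :
    ∫ x in t * a..t * b, c / t * x / |t + x| ^ γ
      = c / |t| ^ (γ - 1) * ∫ τ in b..a, τ / (1 + τ) ^ γ := by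
  rw [← smul_integral_comp_mul_left, integral_symm b a, smul_eq_mul,
    ← intervalIntegral.integral_neg, ← intervalIntegral.integral_const_mul,
    ← intervalIntegral.integral_const_mul]
  refine integral_congr fun τ hτ => ?_
  have hτ : 0 ≤ 1 + τ := by linarith [(le_inf hb ha).trans hτ.1]
  have habs : |t + t * τ| ^ γ = |t| ^ (γ - 1) * |t| * (1 + τ) ^ γ := by
    rw [show t + t * τ = t * (1 + τ) by ring, abs_mul, abs_of_nonneg hτ,
      Real.mul_rpow (abs_nonneg t) hτ, ← Real.rpow_add_one (abs_pos.2 ht.ne).ne', sub_add_cancel]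
  rw [habs, abs_of_neg ht]
  rcases eq_or_ne ((1 + τ) ^ γ) 0 with h | h
  · simp [h]
  have := (Real.rpow_pos_of_pos (neg_pos.2 ht) (γ - 1)).ne'
  field_simp [ht.ne]

theorem integrableOn_Ioi_div_one_add_rpow {γ c : ℝ} (hγ : 2 < γ) (hc : 0 < c) :
    IntegrableOn (fun τ => τ / (1 + τ) ^ γ) (Ioi c) := by
  have hcmp : IntegrableOn (fun τ : ℝ => τ ^ (1 - γ)) (Ioi c) :=
    (integrableOn_Ioi_rpow_iff hc).2 (by linarith)
  refine hcmp.mono' ((continuousOn_id.div ?_ ?_).aestronglyMeasurable measurableSet_Ioi) ?_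
  · exact (continuous_const.add continuous_id).continuousOn.rpow_const
      fun τ hτ => Or.inr (by linarith)
  · exact fun τ hτ => (Real.rpow_pos_of_pos (by linarith [hc.trans hτ]) γ).ne'
  · refine ae_restrict_of_forall_mem measurableSet_Ioi fun τ hτ => ?_
    have hτ0 : 0 < τ := hc.trans hτ
    rw [Real.norm_of_nonneg (div_nonneg hτ0.le (by positivity)), Real.rpow_sub hτ0, Real.rpow_one]
    exact div_le_div_of_nonneg_left hτ0.le (by positivity)
      (Real.rpow_le_rpow hτ0.le (by linarith) (by linarith))

theorem integral_div_one_add_rpow_le_integral_Ioi {γ c b : ℝ} (hγ : 2 < γ) (hc : 0 < c)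
    (hcb : c ≤ b) : ∫ τ in c..b, τ / (1 + τ) ^ γ ≤ ∫ τ in Ioi c, τ / (1 + τ) ^ γ := by
  rw [integral_of_le hcb]
  refine setIntegral_mono_set (integrableOn_Ioi_div_one_add_rpow hγ hc) ?_
    Ioc_subset_Ioi_self.eventuallyLE
  refine ae_restrict_of_forall_mem measurableSet_Ioi fun τ hτ => ?_
  have hτ0 : 0 < τ := hc.trans hτ
  positivity

section ChordBounds

variable {f : ℝ → ℝ} {t : ℝ}

theorem ConcaveOn.integral_div_abs_add_rpow_le {a : ℝ} (hf : ConcaveOn ℝ (Icc a 0) f)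
    (hf0 : 0 ≤ f 0) (hat : a ≤ t) (ht : t < 0) (γ : ℝ) :
    ∫ x in a..t, f x / |t + x| ^ γ
      ≤ f t / |t| ^ (γ - 1) * ∫ τ in (1:ℝ)..(a / t), τ / (1 + τ) ^ γ := by
  have hne : ∀ x ∈ uIcc a t, t + x ≠ 0 := fun x hx =>
    (show t + x < 0 by linarith [hx.2.trans (sup_le (hat.trans ht.le) ht.le)]).ne
  have hfint := ((hf.subset (Icc_subset_Icc le_rfl ht.le) (convex_Icc _ _)).intervalIntegrable
    hat).div_abs_add_rpow hne γ
  have hchord := ((continuous_const_mul (f t / t)).intervalIntegrable a t).div_abs_add_rpow hne γ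
  have hsubst := integral_div_mul_div_abs_add_rpow ht (f t) γ (a := a / t) (b := 1)
    (by rw [le_div_iff_of_neg ht]; linarith) (by norm_num)
  rw [mul_div_cancel₀ _ ht.ne, mul_one] at hsubst
  rw [← hsubst]
  refine integral_mono_on hat hfint hchord fun x hx => ?_
  exact div_le_div_of_nonneg_right
    (hf.apply_le_div_mul (right_mem_Icc.2 (hat.trans ht.le)) hf0 ⟨hx.1, hx.2.trans ht.le⟩ hx.2 ht)
    (by positivity)

theorem ConcaveOn.le_integral_div_abs_add_rpow (hf : ConcaveOn ℝ (Icc t 0) f) (hf0 : 0 ≤ f 0)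
    (ht : t < 0) (γ : ℝ) :
    f t / |t| ^ (γ - 1) * ∫ τ in (0:ℝ)..1, τ / (1 + τ) ^ γ ≤ ∫ x in t..0, f x / |t + x| ^ γ := by
  have hne : ∀ x ∈ uIcc t 0, t + x ≠ 0 := fun x hx =>
    (show t + x < 0 by linarith [hx.2.trans (sup_le ht.le le_rfl)]).ne
  have hfint := (hf.intervalIntegrable ht.le).div_abs_add_rpow hne γ
  have hchord := ((continuous_const_mul (f t / t)).intervalIntegrable t 0).div_abs_add_rpow hne γ
  have hsubst := integral_div_mul_div_abs_add_rpow ht (f t) γ (a := 1) (b := 0)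
    (by norm_num) (by norm_num)
  rw [mul_one, mul_zero] at hsubst
  rw [← hsubst]
  refine integral_mono_on ht.le hchord hfint fun x hx => ?_
  exact div_le_div_of_nonneg_right
    (hf.div_mul_le_apply (right_mem_Icc.2 ht.le) hf0 (left_mem_Icc.2 ht.le) hx.1 hx.2)
    (by positivity)

end ChordBounds

theorem concave_chord_integral_bounds_general
    (R β t : ℝ) (hβ : -1/2 < β) (ht : t ∈ Ioo (-R) 0)
    (f : ℝ → ℝ)
    (hconc : ConcaveOn ℝ (Icc (-R) 0) f)
    (hnonneg : ∀ x ∈ Icc (-R) 0, 0 ≤ f x)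
    (p : ℝ) (hp : p = f t)
    (aplus aminus : ℝ)
    (haplus : aplus = ∫ τ in Ioi (1:ℝ), τ / (1+τ)^(2*β+5))
    (haminus : aminus = ∫ τ in (0:ℝ)..1, τ / (1+τ)^(2*β+5)) :
    (∫ x in (-R)..t, f x / |t+x| ^ (2*β+5)) ≤ aplus * p / |t| ^ (2*β+4) ∧
    aminus * p / |t| ^ (2*β+4) ≤ ∫ x in t..(0:ℝ), f x / |t+x| ^ (2*β+5) := by
  obtain ⟨hRt, ht0⟩ := ht
  have hf0 : 0 ≤ f 0 := hnonneg 0 ⟨by linarith, le_rfl⟩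
  have hp0 : 0 ≤ p := hp ▸ hnonneg t ⟨hRt.le, ht0.le⟩
  have hleft := hconc.integral_div_abs_add_rpow_le hf0 hRt.le ht0 (2*β+5)
  have hright := (hconc.subset (Icc_subset_Icc hRt.le le_rfl) (convex_Icc _ _))
    |>.le_integral_div_abs_add_rpow hf0 ht0 (2*β+5)
  rw [show 2*β+5-1 = 2*β+4 by ring, ← hp] at hleft hright
  have htail := integral_div_one_add_rpow_le_integral_Ioi (γ := 2*β+5) (by linarith) one_pos
    (show 1 ≤ -R / t by rw [le_div_iff_of_neg ht0]; linarith)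
  constructor
  · calc _ ≤ _ := hleft
      _ ≤ p / |t| ^ (2*β+4) * aplus := by rw [haplus]; gcongr
      _ = aplus * p / |t| ^ (2*β+4) := by ring
  · calc aminus * p / |t| ^ (2*β+4) = _ := by rw [haminus]; ring
      _ ≤ _ := hright

/-- For a nonnegative concave function `f` on `[-R,0]`, `β > -1/2`, `t ∈ (-R,0)`
and `p = f(t)`:
`∫_{-R}^t f(x)/|t+x|^{2β+5} dx ≤ a₊(β) p/|t|^{2β+4}` and
`∫_t^0 f(x)/|t+x|^{2β+5} dx ≥ a₋(β) p/|t|^{2β+4}`. -/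
theorem concave_chord_integral_bounds
    (R β t : ℝ) (hR : 0 < R) (hβ : -1/2 < β) (ht : t ∈ Ioo (-R) 0)
    (f : ℝ → ℝ)
    (hconc : ConcaveOn ℝ (Icc (-R) 0) f)
    (hnonneg : ∀ x ∈ Icc (-R) 0, 0 ≤ f x)
    (p : ℝ) (hp : p = f t)
    (aplus aminus : ℝ)
    (haplus : aplus = ∫ τ in Ioi (1:ℝ), τ / (1+τ)^(2*β+5))
    (haminus : aminus = ∫ τ in (0:ℝ)..1, τ / (1+τ)^(2*β+5)) :
    (∫ x in (-R)..t, f x / |t+x| ^ (2*β+5)) ≤ aplus * p / |t| ^ (2*β+4) ∧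
    aminus * p / |t| ^ (2*β+4) ≤ ∫ x in t..(0:ℝ), f x / |t+x| ^ (2*β+5) :=
  concave_chord_integral_bounds_general R β t hβ ht f hconc hnonneg p hp aplus aminus haplus haminus
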